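/- arXiv:1604.04236 — 4 statements merged into one kernel-verified Lean document; each statement's English description precedes it below -/
import Mathlib

section
/- Under the sign conditions on f and g, if there exists some y > 0 with ∫_{x₀}^{y} g(x)/f(x) dx ≥ 0, then there exists a unique x₁ > 0 with ∫_{x₀}^{x₁} g(x)/f(x) dx = 0. -/
theorem entry_exit_exists_unique (f g : ℝ → ℝ) (hf : Continuous f) (hg : Continuous g)
    (hfpos : ∀ x, 0 < f x)
    (hgneg : ∀ x < 0, g x < 0) (hgpos : ∀ x > 0, 0 < g x)
    (x₀ : ℝ) (hx₀ : x₀ < 0)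
    (hexists : ∃ y > 0, 0 ≤ ∫ x in x₀..y, g x / f x) :
    ∃! x₁ : ℝ, 0 < x₁ ∧ (∫ x in x₀..x₁, g x / f x) = 0 := by
  obtain ⟨y, hy, hyint⟩ := hexists
  set h : ℝ → ℝ := fun x => g x / f x with hh
  have hcont : Continuous h := hg.div hf (fun x => (hfpos x).ne')
  have hint : ∀ a b : ℝ, IntervalIntegrable h MeasureTheory.volume a b :=
    fun a b => hcont.intervalIntegrable a b
  set F : ℝ → ℝ := fun t => ∫ x in x₀..t, h x with hF
  have hFcont : Continuous F := intervalIntegral.continuous_primitive hint x₀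
  -- F 0 < 0
  have hF0 : F 0 < 0 := by
    have : 0 < ∫ x in x₀..(0:ℝ), -h x := by
      apply intervalIntegral.intervalIntegral_pos_of_pos_on ((hint x₀ 0).neg)
      · intro x hx
        have hxneg : x < 0 := hx.2
        have : g x < 0 := hgneg x hxneg
        have := div_neg_of_neg_of_pos this (hfpos x)
        simpa [h] using this
      · exact hx₀
    have hneg : (∫ x in x₀..(0:ℝ), -h x) = -F 0 := by
      simp [F, intervalIntegral.integral_neg]
    linarith [hneg ▸ this]
  -- F strictly increasing on positives
  have hmono : ∀ a b : ℝ, 0 ≤ a → a < b → F a < F b := by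
    intro a b ha hab
    have hpos : 0 < ∫ x in a..b, h x := by
      apply intervalIntegral.intervalIntegral_pos_of_pos_on (hint a b)
      · intro x hx
        have : 0 < x := lt_of_le_of_lt ha hx.1
        exact div_pos (hgpos x this) (hfpos x)
      · exact hab
    have hsplit : F a + ∫ x in a..b, h x = F b :=
      intervalIntegral.integral_add_adjacent_intervals (hint x₀ a) (hint a b)
    linarith
  -- existence via IVT on [0, y]
  have hFy : (0:ℝ) ≤ F y := hyint
  have hiv : Set.Icc (F 0) (F y) ⊆ F '' Set.Icc 0 y :=
    intermediate_value_Icc (le_of_lt hy) hFcont.continuousOn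
  obtain ⟨x₁, hx₁mem, hFx₁⟩ := hiv ⟨le_of_lt hF0, hFy⟩
  have hx₁pos : 0 < x₁ := by
    rcases lt_or_eq_of_le hx₁mem.1 with hlt | heq
    · exact hlt
    · exfalso; rw [← heq] at hFx₁; linarith
  refine ⟨x₁, ⟨hx₁pos, hFx₁⟩, ?_⟩
  rintro z ⟨hzpos, hzint⟩
  by_contra hne
  have hFz : F z = 0 := hzint
  rcases lt_or_gt_of_ne hne with hlt | hgt
  · have := hmono z x₁ (le_of_lt hzpos) hlt
    rw [hFz, hFx₁] at this; exact lt_irrefl _ this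
  · have := hmono x₁ z (le_of_lt hx₁pos) hgt
    rw [hFz, hFx₁] at this; exact lt_irrefl _ this
end

section
/- The entry-exit relation implicitly defined by ∫_{x₀}^{x₁} g(x)/f(x) dx = 0 determines x₁ as a strictly decreasing function of x₀: if x₀ < x₀' < 0 and both x₁(x₀), x₁(x₀') > 0 exist, then x₁(x₀) > x₁(x₀'). -/
theorem entry_exit_strictly_decreasing (f g : ℝ → ℝ) (hf : Continuous f) (hg : Continuous g)
    (hfpos : ∀ x, 0 < f x)
    (hgneg : ∀ x < 0, g x < 0) (hgpos : ∀ x > 0, 0 < g x)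
    (x₀ x₀' x₁ x₁' : ℝ) (h01 : x₀ < x₀') (h02 : x₀' < 0)
    (hx₁ : 0 < x₁) (hx₁' : 0 < x₁')
    (hroot : (∫ x in x₀..x₁, g x / f x) = 0)
    (hroot' : (∫ x in x₀'..x₁', g x / f x) = 0) :
    x₁' < x₁ := by
  have hcont : Continuous (fun x => g x / f x) :=
    hg.div hf (fun x => (hfpos x).ne')
  have hint : ∀ a b : ℝ, IntervalIntegrable (fun x => g x / f x) MeasureTheory.volume a b :=
    fun a b => hcont.intervalIntegrable a b
  -- ∫ x₀..x₀' < 0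
  have hneg : (∫ x in x₀..x₀', g x / f x) < 0 := by
    have := intervalIntegral.intervalIntegral_pos_of_pos_on
      (f := fun x => -(g x / f x)) ((hint x₀ x₀').neg)
      (fun x hx => by
        have hx0 : x < 0 := hx.2.trans h02
        have h1 := hgneg x hx0
        have h2 := hfpos x
        have : g x / f x < 0 := div_neg_of_neg_of_pos h1 h2
        linarith) h01
    have h2 : (∫ x in x₀..x₀', -(g x / f x)) = -(∫ x in x₀..x₀', g x / f x) :=
      intervalIntegral.integral_neg
    linarith [h2 ▸ this]
  -- split
  have hsplit : (∫ x in x₀..x₀', g x / f x) + (∫ x in x₀'..x₁, g x / f x) = 0 := by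
    rw [intervalIntegral.integral_add_adjacent_intervals (hint x₀ x₀') (hint x₀' x₁), hroot]
  have hpos : 0 < (∫ x in x₀'..x₁, g x / f x) := by linarith
  have hsplit2 : (∫ x in x₀'..x₁', g x / f x) + (∫ x in x₁'..x₁, g x / f x)
      = (∫ x in x₀'..x₁, g x / f x) :=
    intervalIntegral.integral_add_adjacent_intervals (hint x₀' x₁') (hint x₁' x₁)
  have hpos2 : 0 < (∫ x in x₁'..x₁, g x / f x) := by
    rw [hroot'] at hsplit2; linarith
  by_contra hle
  push_neg at hle
  rcases eq_or_lt_of_le hle with heq | hlt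
  · rw [heq, intervalIntegral.integral_same] at hpos2; exact lt_irrefl 0 hpos2
  · have : 0 < (∫ x in x₁..x₁', g x / f x) :=
      intervalIntegral.intervalIntegral_pos_of_pos_on (hint x₁ x₁')
        (fun x hx => div_pos (hgpos x (hx₁.trans hx.1)) (hfpos x)) hlt
    rw [intervalIntegral.integral_symm] at this
    linarith
end

section
/- The entry-exit function is continuously differentiable: if f, g are C¹, f > 0, g(x₁) > 0, and ∫_{x₀}^{x₁} g/f = 0 with x₀ < 0 < x₁, then locally x₁ is a C¹ function of x₀ with derivative dx₁/dx₀ = (g(x₀)/f(x₀)) · (f(x₁)/g(x₁)), which is negative. -/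
/-!
With `G t = ∫ x in 0..t, g x / f x`, the condition `∫ x in t..s, g / f = 0` says `G s = G t`.
Since `G' = g / f` does not vanish at `x₁`, the inverse function theorem gives a `C¹` local
inverse `ψ` of `G` near `G x₁ = G x₀`, and `φ = ψ ∘ G` is the entry-exit function. Differentiating
`G (φ t) = G t` gives `φ' t = (g t / f t) / (g (φ t) / f (φ t))`, negative because `t < 0 < φ t`.
-/

open Filter Topology intervalIntegral

theorem Continuous.contDiff_integral {E : Type*} [NormedAddCommGroup E] [NormedSpace ℝ E]
    [CompleteSpace E] {h : ℝ → E} (hh : Continuous h) (a : ℝ) :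
    ContDiff ℝ 1 fun t => ∫ x in a..t, h x := by
  rw [contDiff_one_iff_deriv]
  refine ⟨fun t => (hh.integral_hasStrictDerivAt a t).hasDerivAt.differentiableAt, ?_⟩
  rwa [funext (hh.deriv_integral h a)]

theorem ContDiffAt.exists_comp_eventuallyEq {𝕂 : Type*} [RCLike 𝕂] {E F : Type*}
    [NormedAddCommGroup E] [NormedSpace 𝕂 E] [CompleteSpace E] [NormedAddCommGroup F]
    [NormedSpace 𝕂 F] {n : WithTop ℕ∞} {G : E → F} {G' : E ≃L[𝕂] F} {x₀ x₁ : E}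
    (hG₀ : ContDiffAt 𝕂 n G x₀) (hG₁ : ContDiffAt 𝕂 n G x₁)
    (hG' : HasFDerivAt G (G' : E →L[𝕂] F) x₁) (hn : n ≠ 0) (heq : G x₀ = G x₁) :
    ∃ φ : E → E, ContDiffAt 𝕂 n φ x₀ ∧ φ x₀ = x₁ ∧ G ∘ φ =ᶠ[𝓝 x₀] G := by
  set ψ := hG₁.localInverse hG' hn
  have hψ : ContDiffAt 𝕂 n ψ (G x₀) := heq ▸ hG₁.to_localInverse hG' hn
  have hright : ∀ᶠ y in 𝓝 (G x₀), G (ψ y) = y :=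
    heq ▸ (hG₁.hasStrictFDerivAt' hG' hn).eventually_right_inverse
  refine ⟨ψ ∘ G, hψ.comp x₀ hG₀, ?_, hG₀.continuousAt.eventually hright⟩
  simp only [Function.comp_apply, heq, ψ, hG₁.localInverse_apply_image hG' hn]

theorem DifferentiableAt.hasDerivAt_of_comp_eventuallyEq {𝕜 : Type*}
    [NontriviallyNormedField 𝕜] {G φ : 𝕜 → 𝕜} {a b t : 𝕜}
    (hφ : DifferentiableAt 𝕜 φ t) (hGφ : G ∘ φ =ᶠ[𝓝 t] G)
    (ha : HasDerivAt G a (φ t)) (hb : HasDerivAt G b t) (ha₀ : a ≠ 0) :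
    HasDerivAt φ (b / a) t := by
  have hcomp : HasDerivAt G (a * deriv φ t) t :=
    (ha.comp t hφ.hasDerivAt).congr_of_eventuallyEq hGφ.symm
  rw [← eq_div_of_mul_eq ha₀ ((mul_comm _ _).trans (hcomp.unique hb))]
  exact hφ.hasDerivAt

theorem entry_exit_C1 (f g : ℝ → ℝ) (hf : ContDiff ℝ 1 f) (hg : ContDiff ℝ 1 g)
    (hfpos : ∀ x, 0 < f x)
    (hgneg : ∀ x < 0, g x < 0) (hgpos : ∀ x > 0, 0 < g x)
    (x₀ x₁ : ℝ) (hx₀ : x₀ < 0) (hx₁ : 0 < x₁)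
    (hroot : (∫ x in x₀..x₁, g x / f x) = 0) :
    ∃ δ > 0, ∃ φ : ℝ → ℝ,
      ContDiffOn ℝ 1 φ (Set.Ioo (x₀ - δ) (x₀ + δ)) ∧
      φ x₀ = x₁ ∧
      (∀ t ∈ Set.Ioo (x₀ - δ) (x₀ + δ),
        (∫ x in t..(φ t), g x / f x) = 0 ∧
        HasDerivAt φ (g t / f t * (f (φ t) / g (φ t))) t ∧
        g t / f t * (f (φ t) / g (φ t)) < 0) := by
  have hcont : Continuous fun x => g x / f x :=
    hg.continuous.div hf.continuous fun x => (hfpos x).ne'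
  set G : ℝ → ℝ := fun t => ∫ x in (0 : ℝ)..t, g x / f x
  have hG' (t : ℝ) : HasDerivAt G (g t / f t) t := (hcont.integral_hasStrictDerivAt 0 t).hasDerivAt
  have integral_eq (s t : ℝ) : ∫ x in s..t, g x / f x = G t - G s :=
    (integral_interval_sub_left (hcont.intervalIntegrable 0 t) (hcont.intervalIntegrable 0 s)).symm
  have hG : ContDiff ℝ 1 G := hcont.contDiff_integral 0
  obtain ⟨φ, hφ, hφx₀, hGφ⟩ := hG.contDiffAt.exists_comp_eventuallyEq (x₀ := x₀) hG.contDiffAt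
    ((hG' x₁).hasFDerivAt_equiv (div_pos (hgpos x₁ hx₁) (hfpos x₁)).ne') one_ne_zero
    (by linarith [integral_eq x₀ x₁])
  have hnear : ∀ᶠ t in 𝓝 x₀, ContDiffAt ℝ 1 φ t ∧ G ∘ φ =ᶠ[𝓝 t] G ∧ t < 0 ∧ 0 < φ t :=
    (hφ.eventually (by simp)).and <| hGφ.eventually_nhds.and <| (eventually_lt_nhds hx₀).and <|
      continuousAt_const.eventually_lt hφ.continuousAt (hφx₀ ▸ hx₁)
  obtain ⟨δ, hδ, hball⟩ := Metric.eventually_nhds_iff_ball.1 hnear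
  rw [Real.ball_eq_Ioo] at hball
  refine ⟨δ, hδ, φ, fun t ht => (hball t ht).1.contDiffWithinAt, hφx₀, fun t ht => ?_⟩
  obtain ⟨hφt, hGφt, ht₀, hφt₀⟩ := hball t ht
  have hderiv := (hφt.differentiableAt one_ne_zero).hasDerivAt_of_comp_eventuallyEq hGφt
    (hG' (φ t)) (hG' t) (div_pos (hgpos _ hφt₀) (hfpos _)).ne'
  rw [div_eq_mul_inv, inv_div] at hderiv
  exact ⟨by rw [integral_eq, sub_eq_zero]; exact hGφt.eq_of_nhds, hderiv,
    mul_neg_of_neg_of_pos (div_neg_of_neg_of_pos (hgneg t ht₀) (hfpos t))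
      (div_pos (hfpos _) (hgpos _ hφt₀))⟩
end

section
/- (Persistence of the entry-exit point under C⁰ perturbation.) Suppose fₙ → f and gₙ → g uniformly on compact sets, with all fₙ, f > 0, gₙ, g satisfying the sign condition (negative on (-∞,0), positive on (0,∞)), and x₀ < 0 fixed with the nondegenerate entry-exit point x₁ > 0 for (f,g) (i.e. ∫_{x₀}^{x₁} g/f = 0 and g(x₁) > 0). Then for n large the entry-exit points x₁⁽ⁿ⁾ for (fₙ, gₙ) exist and x₁⁽ⁿ⁾ → x₁. -/
open Filter Set

/-- Uniform convergence of quotients on a compact set. -/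
lemma quot_tendstoUniformlyOn
    (f g : ℝ → ℝ) (fs gs : ℕ → ℝ → ℝ)
    (hf : Continuous f) (hg : Continuous g)
    (hfpos : ∀ x, 0 < f x)
    (K : Set ℝ) (hK : IsCompact K)
    (hfconv : TendstoUniformlyOn fs f atTop K)
    (hgconv : TendstoUniformlyOn gs g atTop K) :
    TendstoUniformlyOn (fun n x => gs n x / fs n x) (fun x => g x / f x) atTop K := by
  rcases K.eq_empty_or_nonempty with rfl | hne
  · simp [Metric.tendstoUniformlyOn_iff]
  rw [Metric.tendstoUniformlyOn_iff]
  intro ε hε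
  obtain ⟨a, haK, ha⟩ := hK.exists_isMinOn hne hf.continuousOn
  set c := f a with hc
  have hcpos : 0 < c := hfpos a
  obtain ⟨M, hM⟩ := hK.exists_bound_of_continuousOn hg.continuousOn
  obtain ⟨B, hB⟩ := hK.exists_bound_of_continuousOn hf.continuousOn
  have hM0 : 0 ≤ M := le_trans (norm_nonneg _) (hM _ hne.choose_spec)
  have hB0 : c ≤ B := le_trans (le_abs_self _) (by simpa using hB _ haK)
  have hB0' : 0 < B := lt_of_lt_of_le hcpos hB0
  have hMB : (0:ℝ) < 4 * (M + B + 1) := by linarith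
  set δ := min (c / 2) (ε * c ^ 2 / (4 * (M + B + 1))) with hδ
  have hδpos : 0 < δ := lt_min (by linarith) (div_pos (by positivity) hMB)
  have h1 := Metric.tendstoUniformlyOn_iff.mp hfconv δ hδpos
  have h2 := Metric.tendstoUniformlyOn_iff.mp hgconv δ hδpos
  filter_upwards [h1, h2] with n hfn hgn x hx
  have hfx : c ≤ f x := ha hx
  have hfn' : |f x - fs n x| < δ := by
    have := hfn x hx; rwa [Real.dist_eq] at this
  have hgn' : |g x - gs n x| < δ := by
    have := hgn x hx; rwa [Real.dist_eq] at this
  have hδc : δ ≤ c / 2 := min_le_left _ _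
  have hfsn : c / 2 ≤ fs n x := by
    have := abs_lt.mp hfn'
    linarith
  have hfsn0 : (0:ℝ) < fs n x := by linarith
  have hfx0 : (0:ℝ) < f x := hfpos x
  rw [Real.dist_eq]
  have heq : g x / f x - gs n x / fs n x
      = (g x * (fs n x - f x) + f x * (g x - gs n x)) / (f x * fs n x) := by
    field_simp
    ring
  rw [heq, abs_div]
  have hnum : |g x * (fs n x - f x) + f x * (g x - gs n x)| ≤ δ * (M + B) := by
    calc |g x * (fs n x - f x) + f x * (g x - gs n x)|
        ≤ |g x * (fs n x - f x)| + |f x * (g x - gs n x)| := abs_add_le _ _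
      _ = |g x| * |fs n x - f x| + |f x| * |g x - gs n x| := by rw [abs_mul, abs_mul]
      _ ≤ M * δ + B * δ := by
          have h3 : |fs n x - f x| ≤ δ := by rw [abs_sub_comm]; exact hfn'.le
          have h4 : |g x - gs n x| ≤ δ := hgn'.le
          gcongr
          · exact by simpa using hM x hx
          · exact by simpa using hB x hx
      _ = δ * (M + B) := by ring
  have hden : c ^ 2 / 2 ≤ |f x * fs n x| := by
    rw [abs_of_pos (by positivity)]
    calc c ^ 2 / 2 = c * (c / 2) := by ring
      _ ≤ f x * fs n x := by gcongr
  have hden0 : (0:ℝ) < |f x * fs n x| := lt_of_lt_of_le (by positivity) hden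
  calc |g x * (fs n x - f x) + f x * (g x - gs n x)| / |f x * fs n x|
      ≤ (δ * (M + B)) / (c ^ 2 / 2) := by
        exact div_le_div₀ (by positivity) hnum (by positivity) hden
    _ < ε := by
        have hδ2 : δ ≤ ε * c ^ 2 / (4 * (M + B + 1)) := min_le_right _ _
        rw [div_lt_iff₀ (by positivity)]
        have h5 : δ * (M + B) ≤ (ε * c ^ 2 / (4 * (M + B + 1))) * (M + B) := by
          gcongr
        have h6 : (ε * c ^ 2 / (4 * (M + B + 1))) * (M + B) < ε * (c ^ 2 / 2) := by
          rw [div_mul_eq_mul_div, div_lt_iff₀ hMB]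
          have hec : (0:ℝ) < ε * c ^ 2 := by positivity
          nlinarith [mul_pos hec (show (0:ℝ) < M + B + 2 by linarith)]
        linarith

/-- Strict monotonicity of the primitive on `Ici 0` when the integrand is positive on `(0,∞)`. -/
lemma primitive_strictMonoOn (φ : ℝ → ℝ) (hφ : Continuous φ)
    (hpos : ∀ x > 0, 0 < φ x) (x₀ : ℝ) :
    StrictMonoOn (fun y => ∫ r in x₀..y, φ r) (Ici 0) := by
  intro a ha b hb hab
  have hint : ∀ u v : ℝ, IntervalIntegrable φ MeasureTheory.volume u v :=
    fun u v => hφ.intervalIntegrable u v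
  have key : (0:ℝ) < ∫ r in a..b, φ r := by
    apply intervalIntegral.intervalIntegral_pos_of_pos_on (hint a b) _ hab
    intro x hx
    exact hpos x (lt_of_le_of_lt ha hx.1)
  have hsub : (∫ r in x₀..b, φ r) - (∫ r in x₀..a, φ r) = ∫ r in a..b, φ r :=
    intervalIntegral.integral_interval_sub_left (hint x₀ b) (hint x₀ a)
  simp only
  linarith [hsub ▸ key]

/-- Pointwise convergence of the primitives. -/
lemma primitive_tendsto
    (f g : ℝ → ℝ) (fs gs : ℕ → ℝ → ℝ)
    (hf : Continuous f) (hg : Continuous g)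
    (hfs : ∀ n, Continuous (fs n)) (hgs : ∀ n, Continuous (gs n))
    (hfpos : ∀ x, 0 < f x) (hfspos : ∀ n x, 0 < fs n x)
    (hfconv : ∀ K : Set ℝ, IsCompact K → TendstoUniformlyOn fs f atTop K)
    (hgconv : ∀ K : Set ℝ, IsCompact K → TendstoUniformlyOn gs g atTop K)
    (x₀ y : ℝ) :
    Tendsto (fun n => ∫ r in x₀..y, gs n r / fs n r) atTop
      (nhds (∫ r in x₀..y, g r / f r)) := by
  have hquot := quot_tendstoUniformlyOn f g fs gs hf hg hfpos (uIcc x₀ y) isCompact_uIcc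
    (hfconv _ isCompact_uIcc) (hgconv _ isCompact_uIcc)
  rw [Metric.tendsto_atTop]
  intro ε hε
  set ε' := ε / (|y - x₀| + 1) with hε'
  have hε'pos : 0 < ε' := by positivity
  obtain ⟨N, hN⟩ := Filter.eventually_atTop.mp
    (Metric.tendstoUniformlyOn_iff.mp hquot ε' hε'pos)
  refine ⟨N, fun n hn => ?_⟩
  have hGF : Continuous fun r => g r / f r := hg.div hf fun x => (hfpos x).ne'
  have hGFn : Continuous fun r => gs n r / fs n r :=
    (hgs n).div (hfs n) fun x => (hfspos n x).ne'
  rw [Real.dist_eq, ← intervalIntegral.integral_sub (hGFn.intervalIntegrable _ _)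
    (hGF.intervalIntegrable _ _)]
  rw [← Real.norm_eq_abs]
  have hb : ‖∫ r in x₀..y, (gs n r / fs n r - g r / f r)‖ ≤ ε' * |y - x₀| := by
    apply intervalIntegral.norm_integral_le_of_norm_le_const
    intro x hx
    have hx' : x ∈ uIcc x₀ y := Set.uIoc_subset_uIcc hx
    have := hN n hn x hx'
    rw [Real.dist_eq, abs_sub_comm] at this
    simpa [Real.norm_eq_abs] using this.le
  have : ε' * |y - x₀| < ε := by
    rw [hε', div_mul_eq_mul_div, div_lt_iff₀ (by positivity)]
    nlinarith [abs_nonneg (y - x₀)]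
  linarith

theorem entry_exit_persistence
    (f g : ℝ → ℝ) (fs gs : ℕ → ℝ → ℝ)
    (hf : Continuous f) (hg : Continuous g)
    (hfs : ∀ n, Continuous (fs n)) (hgs : ∀ n, Continuous (gs n))
    (hfpos : ∀ x, 0 < f x) (hfspos : ∀ n x, 0 < fs n x)
    (hgneg : ∀ x < 0, g x < 0) (hgpos : ∀ x > 0, 0 < g x)
    (hgsneg : ∀ n, ∀ x < 0, gs n x < 0) (hgspos : ∀ n, ∀ x > 0, 0 < gs n x)
    (hfconv : ∀ K : Set ℝ, IsCompact K → TendstoUniformlyOn fs f atTop K)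
    (hgconv : ∀ K : Set ℝ, IsCompact K → TendstoUniformlyOn gs g atTop K)
    (x₀ x₁ : ℝ) (hx₀ : x₀ < 0) (hx₁ : 0 < x₁)
    (hroot : (∫ r in x₀..x₁, g r / f r) = 0) (hnd : 0 < g x₁) :
    ∃ N : ℕ, ∃ xseq : ℕ → ℝ,
      (∀ n ≥ N, 0 < xseq n ∧ (∫ r in x₀..(xseq n), gs n r / fs n r) = 0) ∧
      Tendsto xseq atTop (nhds x₁) := by
  classical
  set F : ℝ → ℝ := fun y => ∫ r in x₀..y, g r / f r with hFdef
  set Fn : ℕ → ℝ → ℝ := fun n y => ∫ r in x₀..y, gs n r / fs n r with hFndef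
  have hmonoF : StrictMonoOn F (Set.Ici 0) :=
    primitive_strictMonoOn _ (hg.div hf fun x => (hfpos x).ne')
      (fun x hx => div_pos (hgpos x hx) (hfpos x)) x₀
  have hmonoFn : ∀ n, StrictMonoOn (Fn n) (Set.Ici 0) := fun n =>
    primitive_strictMonoOn _ ((hgs n).div (hfs n) fun x => (hfspos n x).ne')
      (fun x hx => div_pos (hgspos n x hx) (hfspos n x)) x₀
  have htd : ∀ y, Tendsto (fun n => Fn n y) atTop (nhds (F y)) := fun y =>
    primitive_tendsto f g fs gs hf hg hfs hgs hfpos hfspos hfconv hgconv x₀ y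
  have hcontFn : ∀ n, Continuous (Fn n) := fun n =>
    intervalIntegral.continuous_primitive
      (fun a b => ((hgs n).div (hfs n) fun x => (hfspos n x).ne').intervalIntegrable a b) x₀
  have hFx1 : F x₁ = 0 := hroot
  have key : ∀ ε > (0:ℝ), ε ≤ x₁ / 2 → ∀ᶠ n in atTop,
      ∃ y, 0 < y ∧ Fn n y = 0 ∧ |y - x₁| < ε := by
    intro ε hε hεx
    have ha0 : (0:ℝ) < x₁ - ε := by linarith
    have hFa : F (x₁ - ε) < 0 := by
      have := hmonoF (Set.mem_Ici.mpr ha0.le) (Set.mem_Ici.mpr hx₁.le) (by linarith)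
      linarith [hFx1 ▸ this]
    have hFb : 0 < F (x₁ + ε) := by
      have := hmonoF (Set.mem_Ici.mpr hx₁.le) (Set.mem_Ici.mpr (by linarith : (0:ℝ) ≤ x₁ + ε))
        (by linarith)
      linarith [hFx1 ▸ this]
    filter_upwards [(htd (x₁ - ε)).eventually_lt_const hFa,
      (htd (x₁ + ε)).eventually_const_lt hFb] with n h1 h2
    have hmem : (0:ℝ) ∈ Set.Ioo (Fn n (x₁ - ε)) (Fn n (x₁ + ε)) := ⟨h1, h2⟩
    obtain ⟨y, hy, hFy⟩ := intermediate_value_Ioo (by linarith : x₁ - ε ≤ x₁ + ε)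
      (hcontFn n).continuousOn hmem
    exact ⟨y, by linarith [hy.1], hFy, abs_sub_lt_iff.mpr ⟨by linarith [hy.2], by linarith [hy.1]⟩⟩
  set xseq : ℕ → ℝ := fun n => if h : ∃ y, 0 < y ∧ Fn n y = 0 then h.choose else x₁ with hxdef
  have hx_spec : ∀ n, (∃ y, 0 < y ∧ Fn n y = 0) → 0 < xseq n ∧ Fn n (xseq n) = 0 := by
    intro n h
    simp only [hxdef, dif_pos h]
    exact h.choose_spec
  have keyx : ∀ ε > (0:ℝ), ε ≤ x₁ / 2 → ∀ᶠ n in atTop,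
      0 < xseq n ∧ Fn n (xseq n) = 0 ∧ |xseq n - x₁| < ε := by
    intro ε hε hεx
    filter_upwards [key ε hε hεx] with n hn
    obtain ⟨y, hy0, hFy, hyd⟩ := hn
    obtain ⟨h1, h2⟩ := hx_spec n ⟨y, hy0, hFy⟩
    have hxy : xseq n = y :=
      (hmonoFn n).injOn (Set.mem_Ici.mpr h1.le) (Set.mem_Ici.mpr hy0.le) (by rw [h2, hFy])
    exact ⟨h1, h2, hxy ▸ hyd⟩
  obtain ⟨N, hN⟩ := Filter.eventually_atTop.mp (keyx (x₁ / 2) (by linarith) le_rfl)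
  refine ⟨N, xseq, fun n hn => ⟨(hN n hn).1, (hN n hn).2.1⟩, ?_⟩
  rw [Metric.tendsto_atTop]
  intro ε hε
  obtain ⟨N', hN'⟩ := Filter.eventually_atTop.mp
    (keyx (min ε (x₁ / 2)) (lt_min hε (by linarith)) (min_le_right _ _))
  refine ⟨N', fun n hn => ?_⟩
  rw [Real.dist_eq]
  exact lt_of_lt_of_le (hN' n hn).2.2 (min_le_left _ _)
end
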